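/- Let a ≥ 1, b ≥ 1, q ≥ 0, and let (N_k)_{k≥0} be a sequence in [1, ∞) satisfying N_k ≤ a^k N_{k-1}^{2 + q·2^{-k}} + b^{2^k} for all k ≥ 1. Then liminf_{k→∞} N_k^{1/2^k} ≤ (2√2 · a³ · b^{1 + q/2} · N₀)^{e^{q/2}}. -/
import Mathlib


open Real Filter Finset

lemma aux_two_rpow_neg (m : ℕ) : (2:ℝ) ^ (-(m:ℝ)) = (1/2:ℝ) ^ m := by
  rw [Real.rpow_neg (by norm_num), Real.rpow_natCast]
  rw [one_div, inv_pow]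

lemma aux_geom (n : ℕ) : ∑ j ∈ range n, ((1:ℝ)/2) ^ (j+1) ≤ 1 := by
  have h := sum_geometric_two_le n
  calc ∑ j ∈ range n, ((1:ℝ)/2) ^ (j+1) = (1/2) * ∑ j ∈ range n, ((1:ℝ)/2) ^ j := by
        rw [Finset.mul_sum]; congr 1; ext j; ring
    _ ≤ (1/2) * 2 := by linarith
    _ = 1 := by norm_num

lemma aux_sigma (n : ℕ) : ∑ j ∈ range n, ((1:ℝ)/2) ^ (j+2) ≤ 1/2 := by
  have h := sum_geometric_two_le n
  calc ∑ j ∈ range n, ((1:ℝ)/2) ^ (j+2) = (1/4) * ∑ j ∈ range n, ((1:ℝ)/2) ^ j := by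
        rw [Finset.mul_sum]; congr 1; ext j; ring
    _ ≤ (1/4) * 2 := by linarith
    _ = 1/2 := by norm_num

lemma aux_jgeom (n : ℕ) :
    ∑ j ∈ range n, ((j:ℝ)+1) * ((1:ℝ)/2) ^ (j+1) ≤ 2 - ((n:ℝ)+2) * (1/2)^n := by
  induction n with
  | zero => simp
  | succ k ih =>
    rw [Finset.sum_range_succ]
    push_cast
    have h : ((1:ℝ)/2)^(k+1) = (1/2)*(1/2)^k := by ring
    rw [h]
    nlinarith [pow_nonneg (by norm_num : (0:ℝ) ≤ 1/2) k]

set_option maxHeartbeats 1000000 in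
/-- (Moser-iteration recursion lemma.) If `a, b ≥ 1`, `q ≥ 0` and
`N_k ∈ [1,∞)` satisfy `N_k ≤ a^k N_{k-1}^{2 + q·2^{-k}} + b^{2^k}` for all `k ≥ 1`, then
`liminf_{k→∞} N_k^{1/2^k} ≤ (2√2 a³ b^{1+q/2} N₀)^{e^{q/2}}`. -/
theorem stmt2 (a b q : ℝ) (ha : 1 ≤ a) (hb : 1 ≤ b) (hq : 0 ≤ q)
    (N : ℕ → ℝ) (hN1 : ∀ k, 1 ≤ N k)
    (hrec : ∀ k : ℕ, 1 ≤ k →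
      N k ≤ a ^ k * N (k - 1) ^ (2 + q * (2:ℝ) ^ (-(k:ℝ))) + b ^ ((2:ℝ) ^ k)) :
    Filter.liminf (fun k : ℕ => N k ^ ((1:ℝ) / 2 ^ k)) atTop ≤
      (2 * Real.sqrt 2 * a ^ 3 * b ^ (1 + q / 2) * N 0) ^ Real.exp (q / 2) := by
  classical
  have ha0 : (0:ℝ) < a := lt_of_lt_of_le one_pos ha
  have hb0 : (0:ℝ) < b := lt_of_lt_of_le one_pos hb
  have hla : 0 ≤ Real.log a := Real.log_nonneg ha
  have hlb : 0 ≤ Real.log b := Real.log_nonneg hb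
  have hlN0 : 0 ≤ Real.log (N 0) := Real.log_nonneg (hN1 0)
  have hl2 : 0 ≤ Real.log 2 := Real.log_nonneg (by norm_num)
  have hNpos : ∀ k, (0:ℝ) < N k := fun k => lt_of_lt_of_le one_pos (hN1 k)
  set base := 2 * Real.sqrt 2 * a ^ 3 * b ^ (1 + q / 2) * N 0 with hbase
  have hbasepos : (0:ℝ) < base := by
    have h0 := hNpos 0
    positivity
  have hE1 : (1:ℝ) ≤ Real.exp (q/2) := Real.one_le_exp (by linarith)
  have hE0 : (0:ℝ) ≤ Real.exp (q/2) := (Real.exp_pos _).le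
  have hlogbase : Real.log base
      = 3/2 * Real.log 2 + 3 * Real.log a + (1 + q/2) * Real.log b + Real.log (N 0) := by
    have h1 : (2:ℝ) * Real.sqrt 2 ≠ 0 := by positivity
    have h2 : a ^ 3 ≠ 0 := by positivity
    have h3 : b ^ (1 + q/2) ≠ 0 := by positivity
    have h4 : N 0 ≠ 0 := (hNpos 0).ne'
    rw [hbase, Real.log_mul (by positivity) h4, Real.log_mul (by positivity) h3,
        Real.log_mul h1 h2, Real.log_mul (by norm_num) (by positivity),
        Real.log_sqrt (by norm_num), Real.log_pow, Real.log_rpow hb0]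
    push_cast; ring
  have hqlb : 0 ≤ q * Real.log b := mul_nonneg hq hlb
  have hlbase0 : 0 ≤ Real.log base := by rw [hlogbase]; nlinarith
  -- reduce pointwise goal to a log inequality
  have hgoal : ∀ k : ℕ, (1/2:ℝ)^k * Real.log (N k) ≤ Real.log base * Real.exp (q/2) →
      N k ^ ((1:ℝ)/2^k) ≤ base ^ Real.exp (q/2) := by
    intro k hk
    rw [Real.rpow_def_of_pos (hNpos k), Real.rpow_def_of_pos hbasepos]
    apply Real.exp_le_exp.mpr
    have h12 : ((1:ℝ)/2)^k = (1:ℝ)/2^k := by rw [div_pow, one_pow]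
    calc Real.log (N k) * ((1:ℝ)/2^k) = (1/2:ℝ)^k * Real.log (N k) := by rw [← h12]; ring
      _ ≤ Real.log base * Real.exp (q/2) := hk
  refine Filter.liminf_le_of_frequently_le ?_
    (Filter.isBoundedUnder_of ⟨0, fun k => Real.rpow_nonneg (hNpos k).le _⟩)
  rw [Filter.frequently_atTop]
  by_cases hcase : ∀ K : ℕ, ∃ k, K < k ∧
      a ^ k * N (k-1) ^ (2 + q * (2:ℝ) ^ (-(k:ℝ))) < b ^ ((2:ℝ)^k)
  · -- infinitely many indices where the b-term dominates
    intro m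
    obtain ⟨k, hk1, hk2⟩ := hcase m
    have hk0 : 1 ≤ k := by omega
    refine ⟨k, by omega, hgoal k ?_⟩
    have hNk : N k ≤ 2 * b ^ ((2:ℝ)^k) := by
      have h := hrec k hk0
      linarith
    have h1 : Real.log (N k) ≤ Real.log 2 + (2:ℝ)^k * Real.log b := by
      calc Real.log (N k) ≤ Real.log (2 * b ^ ((2:ℝ)^k)) := Real.log_le_log (hNpos k) hNk
        _ = Real.log 2 + (2:ℝ)^k * Real.log b := by
            rw [Real.log_mul (by norm_num) (by positivity), Real.log_rpow hb0]
    have hp : (0:ℝ) ≤ (1/2:ℝ)^k := by positivity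
    have hcancel : (1/2:ℝ)^k * (2:ℝ)^k = 1 := by
      rw [← mul_pow]; norm_num
    have h2 : (1/2:ℝ)^k * Real.log (N k) ≤ (1/2:ℝ)^k * Real.log 2 + Real.log b := by
      have h3 := mul_le_mul_of_nonneg_left h1 hp
      have h4 : (1/2:ℝ)^k * (Real.log 2 + (2:ℝ)^k * Real.log b)
          = (1/2:ℝ)^k * Real.log 2 + ((1/2:ℝ)^k * (2:ℝ)^k) * Real.log b := by ring
      rw [h4, hcancel] at h3
      linarith
    have h5 : (1/2:ℝ)^k ≤ 1/2 := by
      calc (1/2:ℝ)^k ≤ (1/2:ℝ)^1 := pow_le_pow_of_le_one (by norm_num) (by norm_num) hk0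
        _ = 1/2 := pow_one _
    have h6 : (1/2:ℝ)^k * Real.log 2 ≤ 1/2 * Real.log 2 :=
      mul_le_mul_of_nonneg_right h5 hl2
    have h7 : (1/2:ℝ) * Real.log 2 + Real.log b ≤ Real.log base := by
      rw [hlogbase]; nlinarith
    have h8 : Real.log base ≤ Real.log base * Real.exp (q/2) :=
      le_mul_of_one_le_right hlbase0 hE1
    linarith
  · -- eventually the multiplicative recursion holds
    push_neg at hcase
    -- extract a minimal-type threshold K₀
    have hmin : ∃ K₀ : ℕ, (∀ k, K₀ < k →
          b ^ ((2:ℝ)^k) ≤ a ^ k * N (k-1) ^ (2 + q * (2:ℝ) ^ (-(k:ℝ)))) ∧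
        (K₀ = 0 ∨ (0 < K₀ ∧
          a ^ K₀ * N (K₀-1) ^ (2 + q * (2:ℝ) ^ (-(K₀:ℝ))) < b ^ ((2:ℝ)^K₀))) := by
      obtain ⟨K, hK⟩ := hcase
      induction K with
      | zero => exact ⟨0, hK, Or.inl rfl⟩
      | succ n ih =>
        by_cases hbad : a ^ (n+1) * N ((n+1)-1) ^ (2 + q * (2:ℝ) ^ (-((n+1:ℕ):ℝ)))
            < b ^ ((2:ℝ)^(n+1))
        · exact ⟨n+1, hK, Or.inr ⟨by omega, hbad⟩⟩
        · apply ih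
          intro k hk
          rcases Nat.lt_or_ge k (n+2) with h | h
          · have : k = n+1 := by omega
            rw [this]
            exact not_lt.mp hbad
          · exact hK k (by omega)
    obtain ⟨K₀, hP, hK₀or⟩ := hmin
    -- bound on (1/2)^K₀ * log N K₀
    have hxK : (1/2:ℝ)^K₀ * Real.log (N K₀)
        ≤ 1/2 * Real.log 2 + Real.log b + Real.log (N 0) := by
      rcases hK₀or with h0 | ⟨hpos, hk2⟩
      · rw [h0]; simp; linarith
      · have hNk : N K₀ ≤ 2 * b ^ ((2:ℝ)^K₀) := by
          have h := hrec K₀ hpos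
          linarith
        have h1 : Real.log (N K₀) ≤ Real.log 2 + (2:ℝ)^K₀ * Real.log b := by
          calc Real.log (N K₀) ≤ Real.log (2 * b ^ ((2:ℝ)^K₀)) :=
                Real.log_le_log (hNpos K₀) hNk
            _ = Real.log 2 + (2:ℝ)^K₀ * Real.log b := by
                rw [Real.log_mul (by norm_num) (by positivity), Real.log_rpow hb0]
        have hp : (0:ℝ) ≤ (1/2:ℝ)^K₀ := by positivity
        have hcancel : (1/2:ℝ)^K₀ * (2:ℝ)^K₀ = 1 := by rw [← mul_pow]; norm_num
        have h3 := mul_le_mul_of_nonneg_left h1 hp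
        have h4 : (1/2:ℝ)^K₀ * (Real.log 2 + (2:ℝ)^K₀ * Real.log b)
            = (1/2:ℝ)^K₀ * Real.log 2 + ((1/2:ℝ)^K₀ * (2:ℝ)^K₀) * Real.log b := by ring
        rw [h4, hcancel] at h3
        have h5 : (1/2:ℝ)^K₀ ≤ 1/2 := by
          calc (1/2:ℝ)^K₀ ≤ (1/2:ℝ)^1 := pow_le_pow_of_le_one (by norm_num) (by norm_num) hpos
            _ = 1/2 := pow_one _
        have h6 : (1/2:ℝ)^K₀ * Real.log 2 ≤ 1/2 * Real.log 2 :=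
          mul_le_mul_of_nonneg_right h5 hl2
        linarith
    -- one-step multiplicative inequality
    have hstep : ∀ k : ℕ, K₀ ≤ k → (1/2:ℝ)^(k+1) * Real.log (N (k+1)) ≤
        (1/2:ℝ)^(k+1) * (Real.log 2 + ((k:ℝ)+1) * Real.log a)
          + (1 + q * (1/2:ℝ)^(k+2)) * ((1/2:ℝ)^k * Real.log (N k)) := by
      intro k hk
      have hr := hrec (k+1) (by omega)
      have hp' := hP (k+1) (by omega)
      simp only [Nat.add_sub_cancel] at hr hp'
      have h1 : N (k+1) ≤ 2 * (a ^ (k+1) * N k ^ (2 + q * (2:ℝ) ^ (-((k+1:ℕ):ℝ)))) := by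
        linarith
      have hA : (0:ℝ) < a ^ (k+1) * N k ^ (2 + q * (2:ℝ) ^ (-((k+1:ℕ):ℝ))) :=
        mul_pos (pow_pos ha0 _) (Real.rpow_pos_of_pos (hNpos k) _)
      have h2 : Real.log (N (k+1)) ≤ Real.log 2 + (((k:ℝ)+1) * Real.log a
          + (2 + q * (2:ℝ) ^ (-((k+1:ℕ):ℝ))) * Real.log (N k)) := by
        calc Real.log (N (k+1))
            ≤ Real.log (2 * (a ^ (k+1) * N k ^ (2 + q * (2:ℝ) ^ (-((k+1:ℕ):ℝ))))) :=
              Real.log_le_log (hNpos _) h1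
          _ = Real.log 2 + (((k:ℝ)+1) * Real.log a
              + (2 + q * (2:ℝ) ^ (-((k+1:ℕ):ℝ))) * Real.log (N k)) := by
              rw [Real.log_mul (by norm_num) (ne_of_gt hA),
                Real.log_mul (ne_of_gt (pow_pos ha0 _))
                  (ne_of_gt (Real.rpow_pos_of_pos (hNpos k) _)),
                Real.log_pow, Real.log_rpow (hNpos k)]
              push_cast; ring
      have hp : (0:ℝ) ≤ (1/2:ℝ)^(k+1) := by positivity
      have h3 := mul_le_mul_of_nonneg_left h2 hp
      rw [aux_two_rpow_neg (k+1)] at h3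
      have heq : (1/2:ℝ)^(k+1) * (Real.log 2 + (((k:ℝ)+1) * Real.log a
            + (2 + q * (1/2:ℝ)^(k+1)) * Real.log (N k)))
          = (1/2:ℝ)^(k+1) * (Real.log 2 + ((k:ℝ)+1) * Real.log a)
            + (1 + q * (1/2:ℝ)^(k+2)) * ((1/2:ℝ)^k * Real.log (N k)) := by ring
      rw [heq] at h3
      exact h3
    -- main induction invariant
    have key : ∀ k, K₀ ≤ k → (1/2:ℝ)^k * Real.log (N k) ≤
        Real.exp (q * ∑ j ∈ range k, ((1:ℝ)/2)^(j+2)) *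
          ((1/2:ℝ)^K₀ * Real.log (N K₀)
            + ∑ j ∈ range k, ((1:ℝ)/2)^(j+1) * (Real.log 2 + ((j:ℝ)+1) * Real.log a)) := by
      have hCnn : ∀ n : ℕ, 0 ≤ ∑ j ∈ range n,
          ((1:ℝ)/2)^(j+1) * (Real.log 2 + ((j:ℝ)+1) * Real.log a) := by
        intro n
        apply Finset.sum_nonneg
        intro j _
        have hj : (0:ℝ) ≤ (j:ℝ) + 1 := by positivity
        apply mul_nonneg (by positivity)
        nlinarith
      have hx0 : 0 ≤ (1/2:ℝ)^K₀ * Real.log (N K₀) :=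
        mul_nonneg (by positivity) (Real.log_nonneg (hN1 K₀))
      have hexpnn : ∀ n : ℕ, (1:ℝ) ≤ Real.exp (q * ∑ j ∈ range n, ((1:ℝ)/2)^(j+2)) := by
        intro n
        exact Real.one_le_exp (mul_nonneg hq (Finset.sum_nonneg fun j _ => by positivity))
      refine Nat.le_induction ?_ ?_
      · have hexp := hexpnn K₀
        have hC := hCnn K₀
        have expand : Real.exp (q * ∑ j ∈ range K₀, ((1:ℝ)/2)^(j+2)) *
              ((1/2:ℝ)^K₀ * Real.log (N K₀) + ∑ j ∈ range K₀,
                ((1:ℝ)/2)^(j+1) * (Real.log 2 + ((j:ℝ)+1) * Real.log a))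
            = (Real.exp (q * ∑ j ∈ range K₀, ((1:ℝ)/2)^(j+2)) - 1) *
              ((1/2:ℝ)^K₀ * Real.log (N K₀) + ∑ j ∈ range K₀,
                ((1:ℝ)/2)^(j+1) * (Real.log 2 + ((j:ℝ)+1) * Real.log a))
              + (1/2:ℝ)^K₀ * Real.log (N K₀) + ∑ j ∈ range K₀,
                ((1:ℝ)/2)^(j+1) * (Real.log 2 + ((j:ℝ)+1) * Real.log a) := by ring
        nlinarith [mul_nonneg (sub_nonneg.mpr hexp) (add_nonneg hx0 (hCnn K₀))]
      · intro k hk ih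
        have hxk : 0 ≤ (1/2:ℝ)^k * Real.log (N k) :=
          mul_nonneg (by positivity) (Real.log_nonneg (hN1 k))
        have s1 : (1 + q * (1/2:ℝ)^(k+2)) * ((1/2:ℝ)^k * Real.log (N k))
            ≤ Real.exp (q * (1/2:ℝ)^(k+2)) *
              (Real.exp (q * ∑ j ∈ range k, ((1:ℝ)/2)^(j+2)) *
                ((1/2:ℝ)^K₀ * Real.log (N K₀)
                  + ∑ j ∈ range k, ((1:ℝ)/2)^(j+1) * (Real.log 2 + ((j:ℝ)+1) * Real.log a))) := by
          apply mul_le_mul ?_ ih hxk (Real.exp_nonneg _)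
          have := Real.add_one_le_exp (q * (1/2:ℝ)^(k+2))
          linarith
        have s2 : Real.exp (q * (1/2:ℝ)^(k+2)) *
              Real.exp (q * ∑ j ∈ range k, ((1:ℝ)/2)^(j+2))
            = Real.exp (q * ∑ j ∈ range (k+1), ((1:ℝ)/2)^(j+2)) := by
          rw [← Real.exp_add]
          congr 1
          rw [Finset.sum_range_succ]
          ring
        rw [← mul_assoc (Real.exp (q * (1/2:ℝ)^(k+2)))] at s1
        rw [s2] at s1
        have hc1 : 0 ≤ (1/2:ℝ)^(k+1) * (Real.log 2 + ((k:ℝ)+1) * Real.log a) := by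
          have hj : (0:ℝ) ≤ (k:ℝ) + 1 := by positivity
          apply mul_nonneg (by positivity)
          nlinarith
        have s3 : (1/2:ℝ)^(k+1) * (Real.log 2 + ((k:ℝ)+1) * Real.log a)
            ≤ Real.exp (q * ∑ j ∈ range (k+1), ((1:ℝ)/2)^(j+2)) *
              ((1/2:ℝ)^(k+1) * (Real.log 2 + ((k:ℝ)+1) * Real.log a)) :=
          le_mul_of_one_le_left hc1 (hexpnn (k+1))
        have hCsucc : ∑ j ∈ range (k+1), ((1:ℝ)/2)^(j+1) * (Real.log 2 + ((j:ℝ)+1) * Real.log a)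
            = (∑ j ∈ range k, ((1:ℝ)/2)^(j+1) * (Real.log 2 + ((j:ℝ)+1) * Real.log a))
              + (1/2:ℝ)^(k+1) * (Real.log 2 + ((k:ℝ)+1) * Real.log a) :=
          Finset.sum_range_succ _ _
        have h3 := hstep k hk
        rw [hCsucc]
        have expand : Real.exp (q * ∑ j ∈ range (k+1), ((1:ℝ)/2)^(j+2)) *
              ((1/2:ℝ)^K₀ * Real.log (N K₀)
                + ((∑ j ∈ range k, ((1:ℝ)/2)^(j+1) * (Real.log 2 + ((j:ℝ)+1) * Real.log a))
                  + (1/2:ℝ)^(k+1) * (Real.log 2 + ((k:ℝ)+1) * Real.log a)))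
            = Real.exp (q * ∑ j ∈ range (k+1), ((1:ℝ)/2)^(j+2)) *
              ((1/2:ℝ)^K₀ * Real.log (N K₀)
                + ∑ j ∈ range k, ((1:ℝ)/2)^(j+1) * (Real.log 2 + ((j:ℝ)+1) * Real.log a))
              + Real.exp (q * ∑ j ∈ range (k+1), ((1:ℝ)/2)^(j+2)) *
                ((1/2:ℝ)^(k+1) * (Real.log 2 + ((k:ℝ)+1) * Real.log a)) := by ring
        rw [expand]
        linarith
    -- conclude
    intro m
    refine ⟨max m (K₀+1), le_max_left _ _, hgoal _ ?_⟩
    set k := max m (K₀+1) with hkdef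
    have hkK : K₀ ≤ k := le_trans (Nat.le_succ K₀) (le_max_right _ _)
    have h1 := key k hkK
    have hσ : ∑ j ∈ range k, ((1:ℝ)/2)^(j+2) ≤ 1/2 := aux_sigma k
    have hσ0 : 0 ≤ ∑ j ∈ range k, ((1:ℝ)/2)^(j+2) :=
      Finset.sum_nonneg fun j _ => by positivity
    have hexpmono : Real.exp (q * ∑ j ∈ range k, ((1:ℝ)/2)^(j+2)) ≤ Real.exp (q/2) := by
      apply Real.exp_le_exp.mpr
      nlinarith
    have hC : ∑ j ∈ range k, ((1:ℝ)/2)^(j+1) * (Real.log 2 + ((j:ℝ)+1) * Real.log a)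
        ≤ Real.log 2 + 2 * Real.log a := by
      have e1 : ∑ j ∈ range k, ((1:ℝ)/2)^(j+1) * (Real.log 2 + ((j:ℝ)+1) * Real.log a)
          = (∑ j ∈ range k, ((1:ℝ)/2)^(j+1)) * Real.log 2
            + (∑ j ∈ range k, ((j:ℝ)+1) * ((1:ℝ)/2)^(j+1)) * Real.log a := by
        rw [Finset.sum_mul, Finset.sum_mul, ← Finset.sum_add_distrib]
        congr 1; ext j; ring
      rw [e1]
      have g1 := aux_geom k
      have g2 := aux_jgeom k
      have g3 : (0:ℝ) ≤ ((k:ℝ)+2) * (1/2)^k := by positivity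
      have t1 : (∑ j ∈ range k, ((1:ℝ)/2)^(j+1)) * Real.log 2 ≤ 1 * Real.log 2 :=
        mul_le_mul_of_nonneg_right g1 hl2
      have t2 : (∑ j ∈ range k, ((j:ℝ)+1) * ((1:ℝ)/2)^(j+1)) * Real.log a ≤ 2 * Real.log a :=
        mul_le_mul_of_nonneg_right (by linarith) hla
      linarith
    have hx0 : 0 ≤ (1/2:ℝ)^K₀ * Real.log (N K₀) :=
      mul_nonneg (by positivity) (Real.log_nonneg (hN1 K₀))
    have hC0 : 0 ≤ ∑ j ∈ range k, ((1:ℝ)/2)^(j+1) * (Real.log 2 + ((j:ℝ)+1) * Real.log a) := by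
      apply Finset.sum_nonneg
      intro j _
      have hj : (0:ℝ) ≤ (j:ℝ) + 1 := by positivity
      apply mul_nonneg (by positivity)
      nlinarith
    have h2 : Real.exp (q * ∑ j ∈ range k, ((1:ℝ)/2)^(j+2)) *
          ((1/2:ℝ)^K₀ * Real.log (N K₀)
            + ∑ j ∈ range k, ((1:ℝ)/2)^(j+1) * (Real.log 2 + ((j:ℝ)+1) * Real.log a))
        ≤ Real.exp (q/2) * (3/2 * Real.log 2 + 2 * Real.log a + Real.log b + Real.log (N 0)) := by
      apply mul_le_mul hexpmono ?_ (by linarith) hE0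
      linarith
    have h3 : 3/2 * Real.log 2 + 2 * Real.log a + Real.log b + Real.log (N 0)
        ≤ Real.log base := by
      rw [hlogbase]; nlinarith
    have h4 : Real.exp (q/2) * (3/2 * Real.log 2 + 2 * Real.log a + Real.log b + Real.log (N 0))
        ≤ Real.log base * Real.exp (q/2) := by
      rw [mul_comm (Real.log base)]
      exact mul_le_mul_of_nonneg_left h3 hE0
    linarith
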